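/- Let G be a Hausdorff topological group, and let λ₁, λ₂ : ℂ* → G be group homomorphisms. Suppose C ∈ G is such that the function t ↦ λ₁(t)·C·λ₂(t)^{-1} converges to some C₀ ∈ G as t → 0 (along the filter of punctured neighborhoods of 0 in ℂ*). Then λ₁(s)·C₀·λ₂(s)^{-1} = C₀ for every s ∈ ℂ*; i.e. the limit C₀ intertwines λ₁ and λ₂. -/

import Mathlib

/-! A limit of `λ₁(t)·C·λ₂(t)⁻¹` along a filter invariant under `t ↦ s t` is fixed by the continuous
map `g ↦ λ₁(s)·g·λ₂(s)⁻¹`, since substituting `s t` for `t` conjugates the family by that map;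
uniqueness of limits in a Hausdorff space does the rest. The filter of punctured neighbourhoods
of `0` in `ℂ*` is such a filter and is nontrivial. -/

open Filter Topology

theorem tendsto_const_mul_nhdsNE_zero {K : Type*} [GroupWithZero K] [TopologicalSpace K]
    [ContinuousMul K] {a : K} (ha : a ≠ 0) : Tendsto (a * ·) (𝓝[≠] 0) (𝓝[≠] 0) := by
  have h := ((continuous_const_mul a).continuousWithinAt (s := {0}ᶜ) (x := 0)).tendsto_nhdsWithin
    (t := {0}ᶜ) fun _ hz => mul_ne_zero ha hz
  rwa [mul_zero] at h

namespace Units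

variable {K : Type*} [GroupWithZero K] [TopologicalSpace K]

theorem tendsto_mul_left_comap_nhdsNE_zero [ContinuousMul K] (s : Kˣ) :
    Tendsto (s * ·) (comap Units.val (𝓝[≠] (0 : K))) (comap Units.val (𝓝[≠] 0)) :=
  tendsto_comap_iff.2 ((tendsto_const_mul_nhdsNE_zero s.ne_zero).comp tendsto_comap)

instance comap_val_nhdsNE_zero_neBot [NeBot (𝓝[≠] (0 : K))] :
    NeBot (comap Units.val (𝓝[≠] (0 : K))) :=
  ‹NeBot _›.comap_of_range_mem <|
    mem_of_superset self_mem_nhdsWithin fun x hx => ⟨Units.mk0 x hx, rfl⟩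

end Units

theorem mul_mul_inv_eq_of_tendsto_of_tendsto_mul_left {M G : Type*} [Monoid M] [Group G]
    [TopologicalSpace G] [ContinuousMul G] [T2Space G] (φ ψ : M →* G) {L : Filter M} [L.NeBot]
    {s : M} (hs : Tendsto (s * ·) L L) {C C₀ : G}
    (h : Tendsto (fun t => φ t * C * (ψ t)⁻¹) L (𝓝 C₀)) :
    φ s * C₀ * (ψ s)⁻¹ = C₀ := by
  have h_shift : Tendsto (fun t => φ s * (φ t * C * (ψ t)⁻¹) * (ψ s)⁻¹) L (𝓝 C₀) :=
    (h.comp hs).congr fun t => by simp only [Function.comp_apply, map_mul, mul_inv_rev, mul_assoc]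
  exact tendsto_nhds_unique ((h.const_mul (φ s)).mul_const (ψ s)⁻¹) h_shift

/-- If `λ₁(t)·C·λ₂(t)⁻¹` converges to `C₀` as `t → 0` (along punctured
neighbourhoods of `0` in `ℂ*`), then `λ₁(s)·C₀·λ₂(s)⁻¹ = C₀` for every `s`. -/
theorem limit_intertwines (G : Type*) [Group G] [TopologicalSpace G]
    [IsTopologicalGroup G] [T2Space G]
    (lam1 lam2 : ℂˣ →* G) (C C₀ : G)
    (hlim : Tendsto (fun t : ℂˣ => lam1 t * C * (lam2 t)⁻¹)
      (Filter.comap (Units.val : ℂˣ → ℂ) (𝓝[≠] (0 : ℂ))) (𝓝 C₀)) :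
    ∀ s : ℂˣ, lam1 s * C₀ * (lam2 s)⁻¹ = C₀ := fun s =>
  mul_mul_inv_eq_of_tendsto_of_tendsto_mul_left lam1 lam2
    (Units.tendsto_mul_left_comap_nhdsNE_zero s) hlim
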